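/- Every automorphism of M_n(ℂ) of the form Ad u with u unitary is an operational extreme point of the set of unital completely positive maps on M_n(ℂ). -/

import Mathlib

/-!
The Choi matrix of `Ad u` is the rank-one matrix `|vec u⟩⟨vec u|`. In a decomposition
`Ad u = Ad a ∘ Φ₁ + Ad b ∘ Φ₂` with `Φᵢ` completely positive, both summands have positive
semidefinite Choi matrices adding up to this rank-one matrix, so they are `l` and `1 - l` times it.
The Choi matrix determines the map, hence `Ad a ∘ Φ₁ = l • Ad u`; evaluating at `1` gives
`a a* = l • 1`, and `a ≠ 0`, `b ≠ 0` force `0 < l < 1`.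
-/

open Matrix ComplexOrder

/-- The algebra of `n × n` complex matrices. -/
abbrev Mat (n : ℕ) := Matrix (Fin n) (Fin n) ℂ

/-- The map `Ad v : x ↦ v x v*` as a linear map. -/
noncomputable def adL {n : ℕ} (v : Mat n) : Mat n →ₗ[ℂ] Mat n where
  toFun x := v * x * star v
  map_add' x y := by simp [Matrix.mul_add, Matrix.add_mul]
  map_smul' c x := by simp [Matrix.mul_smul, Matrix.smul_mul]

/-- A positive map sends positive semidefinite matrices to positive semidefinite matrices. -/
def IsPosMap (n : ℕ) (Φ : Mat n →ₗ[ℂ] Mat n) : Prop :=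
  ∀ A : Mat n, A.PosSemidef → (Φ A).PosSemidef

/-- `Φ` is completely positive: `Φ ⊗ id_k` is positive for every `k`, where a block matrix
in `M_n ⊗ M_k` is applied `Φ` blockwise. -/
def IsCompletelyPositive (n : ℕ) (Φ : Mat n →ₗ[ℂ] Mat n) : Prop :=
  ∀ k : ℕ, ∀ A : Matrix (Fin n × Fin k) (Fin n × Fin k) ℂ, A.PosSemidef →
    (Matrix.of fun p q : Fin n × Fin k =>
      (Φ (Matrix.of fun i j => A (i, p.2) (j, q.2))) p.1 q.1).PosSemidef

/-- Unital completely positive map. -/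
def IsUCP (n : ℕ) (Φ : Mat n →ₗ[ℂ] Mat n) : Prop :=
  Φ 1 = 1 ∧ IsCompletelyPositive n Φ

/-- A finite operational partition of unity: nonzero matrices with `∑ vᵢ vᵢ* = 1`. -/
def IsFOP {n m : ℕ} (v : Fin m → Mat n) : Prop :=
  (∀ i, v i ≠ 0) ∧ ∑ i, v i * star (v i) = 1

/-- Operational extreme point of a set `S` of linear maps. -/
def IsOpExtreme (n : ℕ) (S : Set (Mat n →ₗ[ℂ] Mat n)) (Φ : Mat n →ₗ[ℂ] Mat n) : Prop :=
  Φ ∈ S ∧ ∀ (a b : Mat n) (Φ₁ Φ₂ : Mat n →ₗ[ℂ] Mat n),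
    Φ₁ ∈ S → Φ₂ ∈ S → a ≠ 0 → b ≠ 0 → a * star a + b * star b = 1 →
    Φ = (adL a).comp Φ₁ + (adL b).comp Φ₂ →
    ∃ l : ℝ, l ∈ Set.Ioo (0 : ℝ) 1 ∧
      a * star a = (l : ℂ) • (1 : Mat n) ∧
      b * star b = ((1 - l : ℝ) : ℂ) • (1 : Mat n) ∧
      ((l⁻¹ : ℝ) : ℂ) • (adL a).comp Φ₁ = Φ ∧
      (((1 - l)⁻¹ : ℝ) : ℂ) • (adL b).comp Φ₂ = Φ

namespace Matrix.PosSemidef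

variable {𝕜 m : Type*} [RCLike 𝕜] [Fintype m] {P Q : Matrix m m 𝕜} {w : m → 𝕜}

theorem mulVec_eq_zero_of_add_eq_vecMulVec (hP : P.PosSemidef) (hQ : Q.PosSemidef)
    (h : P + Q = vecMulVec w (star w)) {y : m → 𝕜} (hy : star w ⬝ᵥ y = 0) : P *ᵥ y = 0 := by
  have hsum : star y ⬝ᵥ P *ᵥ y + star y ⬝ᵥ Q *ᵥ y = 0 := by
    rw [← dotProduct_add, ← add_mulVec, h, vecMulVec_mulVec, hy]
    simp
  refine (hP.dotProduct_mulVec_zero_iff y).1 ?_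
  exact ((add_eq_zero_iff_of_nonneg (hP.dotProduct_mulVec_nonneg y)
    (hQ.dotProduct_mulVec_nonneg y)).1 hsum).1

theorem mul_vecMulVec_of_add_eq_vecMulVec (hP : P.PosSemidef) (hQ : Q.PosSemidef)
    (h : P + Q = vecMulVec w (star w)) :
    P * vecMulVec w (star w) = (star w ⬝ᵥ w) • P := by
  refine ext_iff_mulVec.2 fun x => ?_
  have hx : star w ⬝ᵥ ((star w ⬝ᵥ w) • x - (star w ⬝ᵥ x) • w) = 0 := by
    simp only [dotProduct_sub, dotProduct_smul, smul_eq_mul, mul_comm, sub_self]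
  have := mulVec_eq_zero_of_add_eq_vecMulVec hP hQ h hx
  rw [mulVec_sub, mulVec_smul, mulVec_smul, sub_eq_zero] at this
  rw [← mulVec_mulVec, vecMulVec_mulVec, op_smul_eq_smul, mulVec_smul, ← this, smul_mulVec]

theorem exists_eq_smul_vecMulVec_of_add_eq (hP : P.PosSemidef) (hQ : Q.PosSemidef)
    (h : P + Q = vecMulVec w (star w)) :
    ∃ l : ℝ, 0 ≤ l ∧ l ≤ 1 ∧ P = (l : 𝕜) • vecMulVec w (star w) := by
  by_cases hw : w = 0
  · refine ⟨0, le_rfl, zero_le_one, ext_iff_mulVec.2 fun y => ?_⟩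
    rw [mulVec_eq_zero_of_add_eq_vecMulVec hP hQ h (by simp [hw])]
    simp
  -- `P` vanishes on `w^⊥`, so it commutes with `W = |w⟩⟨w|`, and then `s² P = W P W = p W`.
  set W := vecMulVec w (star w)
  obtain ⟨s, hs0, hs⟩ := RCLike.nonneg_iff_exists_ofReal.1 (dotProduct_star_self_nonneg w)
  obtain ⟨p, hp0, hp⟩ := RCLike.nonneg_iff_exists_ofReal.1 (hP.dotProduct_mulVec_nonneg w)
  obtain ⟨q, hq0, hq⟩ := RCLike.nonneg_iff_exists_ofReal.1 (hQ.dotProduct_mulVec_nonneg w)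
  have hs_pos : 0 < s := lt_of_le_of_ne hs0 fun h0 => hw <| dotProduct_star_self_eq_zero.1 <| by
    rw [← hs, ← h0, RCLike.ofReal_zero]
  have hpq : p + q = s ^ 2 := by
    have := congrArg (star w ⬝ᵥ · *ᵥ w) h
    simp only [add_mulVec, dotProduct_add, ← hp, ← hq, W, vecMulVec_mulVec, op_smul_eq_smul,
      dotProduct_smul, ← hs, smul_eq_mul] at this
    exact_mod_cast this.trans (sq _).symm
  have hPW : P * W = (s : 𝕜) • P := hs ▸ mul_vecMulVec_of_add_eq_vecMulVec hP hQ h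
  have hWP : W * P = (s : 𝕜) • P := by
    simpa [conjTranspose_mul, hP.1.eq, W, (posSemidef_vecMulVec_self_star w).1.eq] using
      congrArg (·ᴴ) hPW
  have hWPW : W * P * W = (p : 𝕜) • W := by
    rw [vecMulVec_mul, vecMulVec_mul_vecMulVec, ← dotProduct_mulVec, ← hp, vecMulVec_smul]
  have key : ((s ^ 2 : ℝ) : 𝕜) • P = (p : 𝕜) • W := by
    rw [← hWPW, Matrix.mul_assoc, hPW, Matrix.mul_smul, hWP, smul_smul]
    push_cast
    ring_nf
  refine ⟨p / s ^ 2, by positivity, div_le_one_of_le₀ (by linarith) (by positivity), ?_⟩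
  rw [div_eq_inv_mul, RCLike.ofReal_mul, mul_smul, ← key, RCLike.ofReal_inv, inv_smul_smul₀]
  exact_mod_cast (pow_pos hs_pos 2).ne'

end Matrix.PosSemidef

namespace Matrix

variable {R m : Type*} [CommSemiring R] [DecidableEq m]

/-- The Choi matrix `∑ E_kl ⊗ Φ E_kl`, indexed so that `choiMatrix (Ad v) = |vec v⟩⟨vec v|`. -/
noncomputable def choiMatrix :
    (Matrix m m R →ₗ[R] Matrix m m R) →ₗ[R] Matrix (m × m) (m × m) R where
  toFun Φ := of fun p q => Φ (single p.1 q.1 1) p.2 q.2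
  map_add' _ _ := rfl
  map_smul' _ _ := rfl

@[simp]
theorem choiMatrix_apply (Φ : Matrix m m R →ₗ[R] Matrix m m R) (p q : m × m) :
    choiMatrix Φ p q = Φ (single p.1 q.1 1) p.2 q.2 := rfl

theorem choiMatrix_injective [Fintype m] :
    Function.Injective (choiMatrix : (Matrix m m R →ₗ[R] Matrix m m R) → _) := by
  intro Φ Ψ h
  refine (stdBasis R m m).ext fun ⟨k, l⟩ => ?_
  ext i j
  simpa [stdBasis_eq_single] using congrFun (congrFun h (k, i)) (l, j)

end Matrix

section CompletelyPositive

variable {n : ℕ}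

@[simp]
theorem adL_apply (v x : Mat n) : adL v x = v * x * star v := rfl

theorem IsCompletelyPositive.comp {Φ Ψ : Mat n →ₗ[ℂ] Mat n} (hΨ : IsCompletelyPositive n Ψ)
    (hΦ : IsCompletelyPositive n Φ) : IsCompletelyPositive n (Ψ ∘ₗ Φ) :=
  fun k A hA => hΨ k _ (hΦ k A hA)

open Kronecker in
theorem isCompletelyPositive_adL (v : Mat n) : IsCompletelyPositive n (adL v) := by
  intro k A hA
  convert hA.mul_mul_conjTranspose_same (v ⊗ₖ (1 : Matrix (Fin k) (Fin k) ℂ)) using 1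
  ext ⟨i, k₁⟩ ⟨j, k₂⟩
  simp [Matrix.mul_apply, one_apply, Fintype.sum_prod_type, star_apply, apply_ite]

theorem choiMatrix_adL (v : Mat n) : choiMatrix (adL v) = vecMulVec (vec v) (star (vec v)) := by
  ext ⟨k, i⟩ ⟨l, j⟩
  simp [Matrix.mul_apply, single_apply, vecMulVec_apply, ite_and, Finset.sum_ite_eq]

theorem IsCompletelyPositive.posSemidef_choiMatrix {Φ : Mat n →ₗ[ℂ] Mat n}
    (h : IsCompletelyPositive n Φ) : (choiMatrix Φ).PosSemidef := by
  have hblock : ∀ k l : Fin n,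
      (of fun i j => vecMulVec (vec (1 : Mat n)) (star (vec 1)) (i, k) (j, l)) = single k l 1 := by
    intro k l
    ext i j
    simp only [of_apply, vecMulVec_apply, vec, one_apply, single_apply]
    split_ifs <;> simp_all
  -- Up to swapping the tensor factors, the Choi matrix is `Φ ⊗ id` applied to `|vec 1⟩⟨vec 1|`.
  rw [← posSemidef_submatrix_equiv (Equiv.prodComm _ _)]
  convert h n _ (posSemidef_vecMulVec_self_star (vec 1)) using 1
  ext ⟨i, k⟩ ⟨j, l⟩
  simp [hblock]

end CompletelyPositive

theorem automorphism_opExtreme_general {n : ℕ} (u : Mat n)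
    (hu : u * star u = 1) :
    IsOpExtreme n {Φ | IsUCP n Φ} (adL u) := by
  refine ⟨⟨by simp [hu], isCompletelyPositive_adL u⟩, ?_⟩
  rintro a b Φ₁ Φ₂ ⟨hΦ₁_unital, hΦ₁⟩ ⟨hΦ₂_unital, hΦ₂⟩ ha hb - hsum
  obtain ⟨l, hl0, hl1, hchoi⟩ := PosSemidef.exists_eq_smul_vecMulVec_of_add_eq
    ((isCompletelyPositive_adL a).comp hΦ₁).posSemidef_choiMatrix
    ((isCompletelyPositive_adL b).comp hΦ₂).posSemidef_choiMatrix
    (by rw [← map_add, ← hsum, choiMatrix_adL])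
  have h₁ : (adL a).comp Φ₁ = (l : ℂ) • adL u :=
    choiMatrix_injective (by simpa [choiMatrix_adL] using hchoi)
  have h₂ : (adL b).comp Φ₂ = ((1 - l : ℝ) : ℂ) • adL u := by
    rw [eq_sub_of_add_eq' hsum.symm, h₁]
    push_cast
    module
  have haa : a * star a = (l : ℂ) • 1 := by
    simpa [hΦ₁_unital, hu] using LinearMap.congr_fun h₁ 1
  have hbb : b * star b = ((1 - l : ℝ) : ℂ) • 1 := by
    simpa [hΦ₂_unital, hu] using LinearMap.congr_fun h₂ 1
  have hl_ne : l ≠ 0 := fun h => ha <| self_mul_conjTranspose_eq_zero.1 <| by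
    simpa [h, star_eq_conjTranspose] using haa
  have hl_ne' : 1 - l ≠ 0 := fun h => hb <| self_mul_conjTranspose_eq_zero.1 <| by
    simpa [h, star_eq_conjTranspose] using hbb
  refine ⟨l, ⟨hl0.lt_of_ne' hl_ne, hl1.lt_of_ne (sub_ne_zero.1 hl_ne').symm⟩, haa, hbb, ?_, ?_⟩
  · rw [h₁, Complex.ofReal_inv, inv_smul_smul₀ (Complex.ofReal_ne_zero.2 hl_ne)]
  · rw [h₂, Complex.ofReal_inv, inv_smul_smul₀ (Complex.ofReal_ne_zero.2 hl_ne')]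

theorem automorphism_opExtreme {n : ℕ} (u : Mat n)
    (hu : u * star u = 1) (hu' : star u * u = 1) :
    IsOpExtreme n {Φ | IsUCP n Φ} (adL u) :=
  automorphism_opExtreme_general u hu
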